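/- arXiv:1802.04327 — 2 statements merged into one kernel-verified Lean document; each statement's English description precedes it below -/
import Mathlib

section
/- Let K = [A,B] ⊂ ℝ be an interval of diameter D = B − A, let δ ∈ (0, D/2) and η > 0 be constants, and let f_1, …, f_{T+1} : K → ℝ be convex functions, each G-Lipschitz and taking values in [0, C]. Run OGD-SeMP with constant parameters η_k = η and δ_k = δ. Then for any two odd time steps s < r (with r ≤ T+1), setting s' = (s−1)/2, r' = (r−1)/2 and Δ = r − s, the expected interval regret satisfies E[R_{[s,r]}] ≤ 2D²/η + η G² Δ + η L_{[s,r]}/(4δ²) + 4 δ G Δ, where the expectation is over the i.i.d. uniform ±1 random signs ε_0, ε_1, … used by the algorithm. -/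
set_option maxHeartbeats 1600000


open Finset

/-- Iterates `y_k` of the OGD-SeMP algorithm on `K = [A,B]` with constant
parameters `η`, `δ`, loss functions `f`, initial point `y0` and sign sequence `ε`.
The update is `y_{k+1} = Π_{[A+δ, B-δ]}(y_k − η g̃_k)` where
`g̃_k = (f_{2k+1}(y_k + ε_k δ) − f_{2k+2}(y_k − ε_k δ)) / (2 ε_k δ)`. -/
noncomputable def ogdY (A B η δ : ℝ) (f : ℕ → ℝ → ℝ) (y0 : ℝ) (ε : ℕ → ℝ) : ℕ → ℝ
  | 0 => y0
  | k + 1 =>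
      max (min (B - δ)
        (ogdY A B η δ f y0 ε k -
          η * ((f (2 * k + 1) (ogdY A B η δ f y0 ε k + ε k * δ) -
                f (2 * k + 2) (ogdY A B η δ f y0 ε k - ε k * δ)) / (2 * ε k * δ))))
        (A + δ)

/-- The point `x_t` played by OGD-SeMP at round `t ≥ 1`:
`x_{2k+1} = y_k + ε_k δ` and `x_{2k+2} = y_k − ε_k δ`. -/
noncomputable def ogdX (A B η δ : ℝ) (f : ℕ → ℝ → ℝ) (y0 : ℝ) (ε : ℕ → ℝ) (t : ℕ) : ℝ :=
  if t % 2 = 1 then ogdY A B η δ f y0 ε ((t - 1) / 2) + ε ((t - 1) / 2) * δ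
  else ogdY A B η δ f y0 ε (t / 2 - 1) - ε (t / 2 - 1) * δ

/-- The real-valued `±1` sign sequence determined by a finite vector of fair-coin
outcomes `σ : Fin M → Bool` (coordinates beyond `M` are irrelevant). -/
noncomputable def signOf (M : ℕ) (σ : Fin M → Bool) : ℕ → ℝ :=
  fun k => if h : k < M then (if σ ⟨k, h⟩ then 1 else -1) else 1

/-- The interval regret `R_{[s,r]}` of OGD-SeMP for a given sign sequence `ε`. -/
noncomputable def intervalRegret (A B η δ : ℝ) (f : ℕ → ℝ → ℝ) (y0 : ℝ) (ε : ℕ → ℝ)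
    (s r : ℕ) : ℝ :=
  (∑ t ∈ Finset.Icc s r, f t (ogdX A B η δ f y0 ε t)) -
    sInf ((fun x => ∑ t ∈ Finset.Icc s r, f t x) '' Set.Icc A B)

/-- The instantaneous deviation `α_k = sup_{x ∈ [A,B]} |f_{2k+1}(x) − f_{2k+2}(x)|`. -/
noncomputable def instDev (A B : ℝ) (f : ℕ → ℝ → ℝ) (k : ℕ) : ℝ :=
  sSup ((fun x => |f (2 * k + 1) x - f (2 * k + 2) x|) '' Set.Icc A B)



lemma clampMem {a b : ℝ} (z : ℝ) (hab : a ≤ b) : max (min b z) a ∈ Set.Icc a b :=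
  ⟨le_max_right _ _, max_le (min_le_left _ _) hab⟩

lemma clampSq {a b u : ℝ} (z : ℝ) (hu : u ∈ Set.Icc a b) :
    (max (min b z) a - u) ^ 2 ≤ (z - u) ^ 2 := by
  obtain ⟨h1, h2⟩ := hu
  rcases le_total z a with h | h
  · rw [min_eq_right (h.trans (h1.trans h2)), max_eq_right h]
    nlinarith
  · rcases le_total z b with h' | h'
    · rw [min_eq_right h', max_eq_left h]
    · rw [min_eq_left h', max_eq_left (h1.trans h2)]
      nlinarith

lemma clampClose {a b u : ℝ} (δ : ℝ) (hδ : 0 ≤ δ) (hab : a + δ ≤ b - δ) (hu : u ∈ Set.Icc a b) :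
    |max (min (b - δ) u) (a + δ) - u| ≤ δ := by
  obtain ⟨h1, h2⟩ := hu
  rcases le_total u (b - δ) with h | h
  · rw [min_eq_right h]
    rcases le_total u (a + δ) with h' | h'
    · rw [max_eq_right h', abs_le]; constructor <;> linarith
    · rw [max_eq_left h', abs_le]; constructor <;> linarith
  · rw [min_eq_left h, max_eq_left hab, abs_le]; constructor <;> linarith

lemma sum_tele (c : ℕ → ℝ) (a : ℕ) : ∀ b, a ≤ b →
    ∑ k ∈ Finset.Ico a b, (c k - c (k + 1)) = c a - c b := by
  intro b
  induction b with
  | zero => intro h; simp [Nat.le_zero.mp h]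
  | succ b ih =>
    intro h
    rcases Nat.lt_or_ge a (b+1) with h' | h'
    · have hab : a ≤ b := by omega
      rw [Finset.sum_Ico_succ_top hab, ih hab]; ring
    · have : a = b + 1 := by omega
      simp [this]

lemma sum_odd_blocks (g : ℕ → ℝ) (a : ℕ) : ∀ b, a ≤ b →
    ∑ t ∈ Finset.Icc (2*a+1) (2*b+1), g t
      = ∑ k ∈ Finset.Ico a b, (g (2*k+1) + g (2*k+2)) + g (2*b+1) := by
  intro b
  induction b with
  | zero => intro h; simp [Nat.le_zero.mp h]
  | succ b ih =>
    intro h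
    rcases Nat.lt_or_ge a (b+1) with h' | h'
    · have hab : a ≤ b := by omega
      have h1 : 2*a+1 ≤ 2*b+2 := by omega
      have h2 : 2*a+1 ≤ 2*b+1+1 := by omega
      have e1 : 2*(b+1)+1 = (2*b+1+1)+1 := by ring
      rw [e1, Finset.sum_Icc_succ_top (by omega), Finset.sum_Icc_succ_top (by omega), ih hab,
        Finset.sum_Ico_succ_top hab]
      simp only [show 2*b+1+1 = 2*b+2 from by omega, show 2*b+2+1 = 2*b+3 from by omega,
        show 2*b+1+1+1 = 2*b+3 from by omega]
      ring
    · have : a = b + 1 := by omega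
      simp [this]

lemma ogdY_step (A B η δ : ℝ) (f : ℕ → ℝ → ℝ) (y0 : ℝ) (ε : ℕ → ℝ) (k : ℕ) :
    ogdY A B η δ f y0 ε (k+1) =
      max (min (B - δ)
        (ogdY A B η δ f y0 ε k -
          η * ((f (2 * k + 1) (ogdY A B η δ f y0 ε k + ε k * δ) -
                f (2 * k + 2) (ogdY A B η δ f y0 ε k - ε k * δ)) / (2 * ε k * δ))))
        (A + δ) := rfl

lemma ogdY_congr (A B η δ : ℝ) (f : ℕ → ℝ → ℝ) (y0 : ℝ) (ε₁ ε₂ : ℕ → ℝ) :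
    ∀ k, (∀ j < k, ε₁ j = ε₂ j) → ogdY A B η δ f y0 ε₁ k = ogdY A B η δ f y0 ε₂ k := by
  intro k
  induction k with
  | zero => intro _; rfl
  | succ k ih =>
    intro h
    have h1 : ogdY A B η δ f y0 ε₁ k = ogdY A B η δ f y0 ε₂ k := ih (fun j hj => h j (by omega))
    rw [ogdY_step, ogdY_step, h1, h k (by omega)]

lemma ogdY_mem {A B η δ : ℝ} {f : ℕ → ℝ → ℝ} {y0 : ℝ} (ε : ℕ → ℝ)
    (hab : A + δ ≤ B - δ) (hy0 : y0 ∈ Set.Icc (A + δ) (B - δ)) (k : ℕ) :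
    ogdY A B η δ f y0 ε k ∈ Set.Icc (A + δ) (B - δ) := by
  induction k with
  | zero => exact hy0
  | succ k ih => rw [ogdY_step]; exact ⟨le_max_right _ _, max_le (min_le_left _ _) hab⟩

lemma ogdX_odd (A B η δ : ℝ) (f : ℕ → ℝ → ℝ) (y0 : ℝ) (ε : ℕ → ℝ) (k : ℕ) :
    ogdX A B η δ f y0 ε (2*k+1) = ogdY A B η δ f y0 ε k + ε k * δ := by
  have e1 : (2*k+1) % 2 = 1 := by omega
  have e2 : (2*k+1-1)/2 = k := by omega
  simp [ogdX, e1, e2]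

lemma ogdX_even (A B η δ : ℝ) (f : ℕ → ℝ → ℝ) (y0 : ℝ) (ε : ℕ → ℝ) (k : ℕ) :
    ogdX A B η δ f y0 ε (2*k+2) = ogdY A B η δ f y0 ε k - ε k * δ := by
  have e1 : ¬ ((2*k+2) % 2 = 1) := by omega
  have e2 : (2*k+2)/2 - 1 = k := by omega
  simp [ogdX, e1, e2]

lemma signOf_pm (M : ℕ) (σ : Fin M → Bool) (k : ℕ) :
    signOf M σ k = 1 ∨ signOf M σ k = -1 := by
  unfold signOf
  split
  · split
    · exact Or.inl rfl
    · exact Or.inr rfl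
  · exact Or.inl rfl

lemma sum_flip (N k : ℕ) (hk : k < N) (Φ : ℝ → ℝ → ℝ) (A B η δ y0 : ℝ) (f : ℕ → ℝ → ℝ) :
    ∑ σ : Fin N → Bool, Φ (signOf N σ k) (ogdY A B η δ f y0 (signOf N σ) k)
      = ∑ σ : Fin N → Bool,
          (Φ 1 (ogdY A B η δ f y0 (signOf N σ) k)
            + Φ (-1) (ogdY A B η δ f y0 (signOf N σ) k)) / 2 := by
  set i : Fin N := ⟨k, hk⟩ with hi
  set fl : (Fin N → Bool) → (Fin N → Bool) := fun σ => Function.update σ i (!σ i) with hfl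
  have hinv : Function.Involutive fl := by
    intro σ
    funext j
    rcases eq_or_ne j i with rfl | hj
    · simp [fl]
    · simp [fl, Function.update_of_ne hj]
  set F : (Fin N → Bool) → ℝ :=
    fun σ => Φ (signOf N σ k) (ogdY A B η δ f y0 (signOf N σ) k) with hF
  have hsum : ∑ σ : Fin N → Bool, F (fl σ) = ∑ σ : Fin N → Bool, F σ :=
    Equiv.sum_comp hinv.toPerm F
  have hYfl : ∀ σ : Fin N → Bool,
      ogdY A B η δ f y0 (signOf N (fl σ)) k = ogdY A B η δ f y0 (signOf N σ) k := by
    intro σ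
    apply ogdY_congr
    intro j hj
    have hjN : j < N := lt_trans hj hk
    have hne : (⟨j, hjN⟩ : Fin N) ≠ i := by
      rw [hi]
      intro hcon
      have := congrArg Fin.val hcon
      simp only [] at this
      omega
    simp [signOf, hjN, fl, Function.update_of_ne hne]
  have key : ∀ σ : Fin N → Bool, F σ + F (fl σ)
      = Φ 1 (ogdY A B η δ f y0 (signOf N σ) k)
        + Φ (-1) (ogdY A B η δ f y0 (signOf N σ) k) := by
    intro σ
    have hsk : signOf N σ k = (if σ i then 1 else -1) := by simp [signOf, hk, hi]
    have hskfl : signOf N (fl σ) k = (if (fl σ) i then 1 else -1) := by simp [signOf, hk, hi]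
    have hflv : (fl σ) i = !σ i := by simp [fl]
    rw [hF]
    simp only [hYfl σ, hsk, hskfl, hflv]
    cases h : σ i <;> simp <;> ring
  calc ∑ σ : Fin N → Bool, F σ = (∑ σ : Fin N → Bool, F σ + ∑ σ : Fin N → Bool, F (fl σ)) / 2 := by
        rw [hsum]; ring
    _ = ∑ σ : Fin N → Bool, (F σ + F (fl σ)) / 2 := by
        rw [← Finset.sum_add_distrib, Finset.sum_div]
    _ = _ := by
        apply Finset.sum_congr rfl
        intro σ _
        rw [key σ]



lemma grad_lb {A B G δ : ℝ} {f : ℝ → ℝ} (hδ : 0 < δ)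
    (hconv : ConvexOn ℝ (Set.Icc A B) f)
    (hlip : ∀ x ∈ Set.Icc A B, ∀ y ∈ Set.Icc A B, |f x - f y| ≤ G * |x - y|)
    (w v : ℝ) (hw : w ∈ Set.Icc (A + δ) (B - δ)) (hv : v ∈ Set.Icc A B) :
    f w - f v ≤ (f (w + δ) - f (w - δ)) / (2 * δ) * (w - v) + G * δ := by
  obtain ⟨hw1, hw2⟩ := hw
  obtain ⟨hv1, hv2⟩ := hv
  have hwp : w + δ ∈ Set.Icc A B := ⟨by linarith, by linarith⟩
  have hwm : w - δ ∈ Set.Icc A B := ⟨by linarith, by linarith⟩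
  have hwK : w ∈ Set.Icc A B := ⟨by linarith, by linarith⟩
  have hvK : v ∈ Set.Icc A B := ⟨hv1, hv2⟩
  set m1 : ℝ := (f w - f (w - δ)) / δ with hm1
  set m2 : ℝ := (f (w + δ) - f w) / δ with hm2
  have hm12 : m1 ≤ m2 := by
    have := hconv.slope_mono_adjacent hwm hwp (by linarith : w - δ < w) (by linarith : w < w + δ)
    rw [show w - (w - δ) = δ by ring, show w + δ - w = δ by ring] at this
    exact this
  have hgeq : (f (w + δ) - f (w - δ)) / (2 * δ) = (m1 + m2) / 2 := by
    rw [hm1, hm2]; ring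
  have hlp : |f (w + δ) - f w| ≤ G * δ := by
    have := hlip (w + δ) hwp w hwK
    rw [show w + δ - w = δ by ring, abs_of_pos hδ] at this
    exact this
  have hlm : |f w - f (w - δ)| ≤ G * δ := by
    have := hlip w hwK (w - δ) hwm
    rw [show w - (w - δ) = δ by ring, abs_of_pos hδ] at this
    exact this
  have hm2G : m2 ≤ G := by
    rw [hm2, div_le_iff₀ hδ]
    have := (abs_le.mp hlp).2
    linarith
  have hm1G : -G ≤ m1 := by
    rw [hm1, le_div_iff₀ hδ]
    have := (abs_le.mp hlm).1
    linarith
  have hG0 : 0 ≤ G := by linarith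
  rw [hgeq]
  rcases le_or_gt (w + δ) v with hc | hc
  · -- v ≥ w + δ
    have hm2d : m2 * δ = f (w + δ) - f w := by rw [hm2]; field_simp
    rcases eq_or_lt_of_le hc with rfl | hc'
    · nlinarith
    · have hs := hconv.slope_mono_adjacent hwK hvK (by linarith : w < w + δ) hc'
      rw [show w + δ - w = δ by ring, ← hm2,
        le_div_iff₀ (by linarith : (0:ℝ) < v - (w + δ))] at hs
      -- hs : m2 * (v - (w+δ)) ≤ f v - f (w+δ)
      nlinarith [mul_nonneg (by linarith : (0:ℝ) ≤ m2 - m1) (by linarith : (0:ℝ) ≤ v - w)]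
  · rcases le_or_gt w v with hc2 | hc2
    · -- w ≤ v < w + δ
      rcases eq_or_lt_of_le hc2 with rfl | hc2'
      · nlinarith
      · have hs := hconv.slope_mono_adjacent hwm hvK (by linarith : w - δ < w) hc2'
        rw [show w - (w - δ) = δ by ring] at hs
        -- hs : m1 ≤ (f v - f w)/(v - w)
        rw [← hm1, le_div_iff₀ (by linarith : (0:ℝ) < v - w)] at hs
        have hmm : (m2 - m1) / 2 * (v - w) ≤ G * δ := by
          apply mul_le_mul (by linarith) (by linarith) (by linarith) hG0
        nlinarith
    · rcases le_or_gt (w - δ) v with hc3 | hc3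
      · -- w - δ ≤ v < w
        have hs := hconv.slope_mono_adjacent hvK hwp hc2 (by linarith : w < w + δ)
        rw [show w + δ - w = δ by ring, ← hm2] at hs
        -- hs : (f w - f v)/(w - v) ≤ m2
        rw [div_le_iff₀ (by linarith : (0:ℝ) < w - v)] at hs
        have hmm : (m2 - m1) / 2 * (w - v) ≤ G * δ := by
          apply mul_le_mul (by linarith) (by linarith) (by linarith) hG0
        nlinarith
      · -- v < w - δ
        have hm1d : m1 * δ = f w - f (w - δ) := by rw [hm1]; field_simp
        have hs := hconv.slope_mono_adjacent hvK hwK hc3 (by linarith : w - δ < w)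
        rw [show w - (w - δ) = δ by ring, ← hm1] at hs
        -- hs : (f (w-δ) - f v)/(w - δ - v) ≤ m1
        rw [div_le_iff₀ (by linarith : (0:ℝ) < w - δ - v)] at hs
        nlinarith [mul_nonneg (by linarith : (0:ℝ) ≤ m2 - m1) (by linarith : (0:ℝ) ≤ w - v)]

lemma block_pointwise {A B G η δ : ℝ} {ft ft1 : ℝ → ℝ} {α : ℝ}
    (hη : 0 < η) (hδ : 0 < δ)
    (hconv : ConvexOn ℝ (Set.Icc A B) ft) (hconv1 : ConvexOn ℝ (Set.Icc A B) ft1)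
    (hlip : ∀ x ∈ Set.Icc A B, ∀ y ∈ Set.Icc A B, |ft x - ft y| ≤ G * |x - y|)
    (hlip1 : ∀ x ∈ Set.Icc A B, ∀ y ∈ Set.Icc A B, |ft1 x - ft1 y| ≤ G * |x - y|)
    (hα : ∀ x ∈ Set.Icc A B, |ft x - ft1 x| ≤ α)
    (w u : ℝ) (hw : w ∈ Set.Icc (A + δ) (B - δ)) (hu : u ∈ Set.Icc (A + δ) (B - δ)) :
    ((ft (w + 1 * δ) + ft1 (w - 1 * δ) -
        ((w - u) ^ 2 -
          (max (min (B - δ)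
            (w - η * ((ft (w + 1 * δ) - ft1 (w - 1 * δ)) / (2 * 1 * δ)))) (A + δ) - u) ^ 2) / η)
      + (ft (w + -1 * δ) + ft1 (w - -1 * δ) -
        ((w - u) ^ 2 -
          (max (min (B - δ)
            (w - η * ((ft (w + -1 * δ) - ft1 (w - -1 * δ)) / (2 * -1 * δ)))) (A + δ) - u) ^ 2) / η)) / 2
      ≤ ft u + ft1 u + η * G ^ 2 + η * α ^ 2 / (4 * δ ^ 2) + 4 * (G * δ) := by
  obtain ⟨hw1, hw2⟩ := hw
  obtain ⟨hu1, hu2⟩ := hu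
  have hδ' : δ ≠ 0 := ne_of_gt hδ
  have hη' : η ≠ 0 := ne_of_gt hη
  have hwp : w + δ ∈ Set.Icc A B := ⟨by linarith, by linarith⟩
  have hwm : w - δ ∈ Set.Icc A B := ⟨by linarith, by linarith⟩
  have hwK : w ∈ Set.Icc A B := ⟨by linarith, by linarith⟩
  have huK : u ∈ Set.Icc A B := ⟨by linarith, by linarith⟩
  rw [show w + 1 * δ = w + δ by ring, show w - 1 * δ = w - δ by ring,
    show w + -1 * δ = w - δ by ring, show w - -1 * δ = w + δ by ring,
    show (2:ℝ) * 1 * δ = 2 * δ by ring, show (2:ℝ) * -1 * δ = -(2 * δ) by ring,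
    show (ft (w - δ) - ft1 (w + δ)) / -(2 * δ)
      = (ft1 (w + δ) - ft (w - δ)) / (2 * δ) by ring]
  -- abbreviations
  set p := ft (w + δ) with hp
  set q := ft (w - δ) with hq
  set p' := ft1 (w + δ) with hp'
  set q' := ft1 (w - δ) with hq'
  -- OGD single-step inequalities
  have o1 : -(((w - u) ^ 2 -
        (max (min (B - δ) (w - η * ((p - q') / (2 * δ)))) (A + δ) - u) ^ 2) / η)
      ≤ -(2 * ((p - q') / (2 * δ)) * (w - u)) + η * ((p - q') / (2 * δ)) ^ 2 := by
    have c1 := clampSq (a := A + δ) (b := B - δ) (w - η * ((p - q') / (2 * δ))) ⟨hu1, hu2⟩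
    have key : ((w - u) ^ 2 - (w - η * ((p - q') / (2 * δ)) - u) ^ 2) / η
        = 2 * ((p - q') / (2 * δ)) * (w - u) - η * ((p - q') / (2 * δ)) ^ 2 := by
      field_simp
      ring
    have h2 : 2 * ((p - q') / (2 * δ)) * (w - u) - η * ((p - q') / (2 * δ)) ^ 2
        ≤ ((w - u) ^ 2 -
          (max (min (B - δ) (w - η * ((p - q') / (2 * δ)))) (A + δ) - u) ^ 2) / η := by
      rw [← key]
      exact (div_le_div_iff_of_pos_right hη).mpr (by linarith)
    linarith
  have o2 : -(((w - u) ^ 2 -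
        (max (min (B - δ) (w - η * ((p' - q) / (2 * δ)))) (A + δ) - u) ^ 2) / η)
      ≤ -(2 * ((p' - q) / (2 * δ)) * (w - u)) + η * ((p' - q) / (2 * δ)) ^ 2 := by
    have c1 := clampSq (a := A + δ) (b := B - δ) (w - η * ((p' - q) / (2 * δ))) ⟨hu1, hu2⟩
    have key : ((w - u) ^ 2 - (w - η * ((p' - q) / (2 * δ)) - u) ^ 2) / η
        = 2 * ((p' - q) / (2 * δ)) * (w - u) - η * ((p' - q) / (2 * δ)) ^ 2 := by
      field_simp
      ring
    have h2 : 2 * ((p' - q) / (2 * δ)) * (w - u) - η * ((p' - q) / (2 * δ)) ^ 2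
        ≤ ((w - u) ^ 2 -
          (max (min (B - δ) (w - η * ((p' - q) / (2 * δ)))) (A + δ) - u) ^ 2) / η := by
      rw [← key]
      exact (div_le_div_iff_of_pos_right hη).mpr (by linarith)
    linarith
  -- smoothing (Lipschitz) bounds
  have l1 : |p - ft w| ≤ G * δ := by
    have := hlip (w + δ) hwp w hwK
    rwa [show w + δ - w = δ by ring, abs_of_pos hδ] at this
  have l2 : |q - ft w| ≤ G * δ := by
    have := hlip (w - δ) hwm w hwK
    rwa [show w - δ - w = -δ by ring, abs_neg, abs_of_pos hδ] at this
  have l3 : |p' - ft1 w| ≤ G * δ := by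
    have := hlip1 (w + δ) hwp w hwK
    rwa [show w + δ - w = δ by ring, abs_of_pos hδ] at this
  have l4 : |q' - ft1 w| ≤ G * δ := by
    have := hlip1 (w - δ) hwm w hwK
    rwa [show w - δ - w = -δ by ring, abs_neg, abs_of_pos hδ] at this
  have lp := (abs_le.mp l1).2
  have lq := (abs_le.mp l2).2
  have lp' := (abs_le.mp l3).2
  have lq' := (abs_le.mp l4).2
  -- comparator (gradient) bounds
  have hb1 : ft w - ft u ≤ (p - q) / (2 * δ) * (w - u) + G * δ :=
    grad_lb hδ hconv hlip w u ⟨hw1, hw2⟩ huK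
  have hb2 : ft1 w - ft1 u ≤ (p' - q') / (2 * δ) * (w - u) + G * δ :=
    grad_lb hδ hconv1 hlip1 w u ⟨hw1, hw2⟩ huK
  -- bounds on the gradient estimates
  have l5 : |p - q| ≤ G * (2 * δ) := by
    have := hlip (w + δ) hwp (w - δ) hwm
    rwa [show w + δ - (w - δ) = 2 * δ by ring,
      show |(2:ℝ) * δ| = 2 * δ from abs_of_pos (by linarith)] at this
  have l6 : |p' - q'| ≤ G * (2 * δ) := by
    have := hlip1 (w + δ) hwp (w - δ) hwm
    rwa [show w + δ - (w - δ) = 2 * δ by ring,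
      show |(2:ℝ) * δ| = 2 * δ from abs_of_pos (by linarith)] at this
  have ha1 := hα (w + δ) hwp
  have ha2 := hα (w - δ) hwm
  have hα0 : 0 ≤ α := le_trans (abs_nonneg _) ha1
  have hG0 : 0 ≤ G := by nlinarith [abs_nonneg (p - q), l5, hδ]
  have h2δ : (0:ℝ) < 2 * δ := by linarith
  -- sum/difference bounds for g1 := (p-q')/(2δ), g2 := (p'-q)/(2δ)
  have hs1 : (p - q') / (2 * δ) + (p' - q) / (2 * δ) ≤ 2 * G := by
    rw [show (p - q') / (2 * δ) + (p' - q) / (2 * δ)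
      = ((p - q) + (p' - q')) / (2 * δ) by ring, div_le_iff₀ h2δ]
    have := (abs_le.mp l5).2
    have := (abs_le.mp l6).2
    linarith
  have hs2 : -(2 * G) ≤ (p - q') / (2 * δ) + (p' - q) / (2 * δ) := by
    rw [show (p - q') / (2 * δ) + (p' - q) / (2 * δ)
      = ((p - q) + (p' - q')) / (2 * δ) by ring, le_div_iff₀ h2δ]
    have := (abs_le.mp l5).1
    have := (abs_le.mp l6).1
    linarith
  have hs3 : (p - q') / (2 * δ) - (p' - q) / (2 * δ) ≤ α / δ := by
    rw [show (p - q') / (2 * δ) - (p' - q) / (2 * δ)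
      = ((p - p') + (q - q')) / (2 * δ) by ring, div_le_iff₀ h2δ,
      show α / δ * (2 * δ) = 2 * α by field_simp]
    have := (abs_le.mp ha1).2
    have := (abs_le.mp ha2).2
    linarith
  have hs4 : -(α / δ) ≤ (p - q') / (2 * δ) - (p' - q) / (2 * δ) := by
    rw [show (p - q') / (2 * δ) - (p' - q) / (2 * δ)
      = ((p - p') + (q - q')) / (2 * δ) by ring, le_div_iff₀ h2δ,
      show -(α / δ) * (2 * δ) = -(2 * α) by field_simp]
    have := (abs_le.mp ha1).1
    have := (abs_le.mp ha2).1
    linarith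
  have sq1 : ((p - q') / (2 * δ) + (p' - q) / (2 * δ)) ^ 2 ≤ (2 * G) ^ 2 := sq_le_sq' hs2 hs1
  have sq2 : ((p - q') / (2 * δ) - (p' - q) / (2 * δ)) ^ 2 ≤ (α / δ) ^ 2 := sq_le_sq' hs4 hs3
  have hsq : η * (((p - q') / (2 * δ)) ^ 2 + ((p' - q) / (2 * δ)) ^ 2)
      ≤ 2 * (η * G ^ 2) + 2 * (η * α ^ 2 / (4 * δ ^ 2)) := by
    have m1 : η * ((p - q') / (2 * δ) + (p' - q) / (2 * δ)) ^ 2 ≤ η * (2 * G) ^ 2 :=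
      mul_le_mul_of_nonneg_left sq1 hη.le
    have m2 : η * ((p - q') / (2 * δ) - (p' - q) / (2 * δ)) ^ 2 ≤ η * (α / δ) ^ 2 :=
      mul_le_mul_of_nonneg_left sq2 hη.le
    have hid4 : η * ((p - q') / (2 * δ) + (p' - q) / (2 * δ)) ^ 2
        + η * ((p - q') / (2 * δ) - (p' - q) / (2 * δ)) ^ 2
        = 2 * (η * ((p - q') / (2 * δ)) ^ 2) + 2 * (η * ((p' - q) / (2 * δ)) ^ 2) := by ring
    have hid5 : η * (2 * G) ^ 2 = 4 * (η * G ^ 2) := by ring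
    have hid3 : η * (α / δ) ^ 2 = 4 * (η * α ^ 2 / (4 * δ ^ 2)) := by ring
    linarith [m1, m2, hid4, hid5, hid3]
  have hid : 2 * ((p - q') / (2 * δ)) * (w - u) + 2 * ((p' - q) / (2 * δ)) * (w - u)
      = 2 * ((p - q) / (2 * δ)) * (w - u) + 2 * ((p' - q') / (2 * δ)) * (w - u) := by ring
  linarith [o1, o2, hb1, hb2, hsq, hid]

/-- **Theorem 1.** Interval-regret bound for OGD-SeMP with constant parameters:
for odd `s < r ≤ T+1`, with `s' = (s−1)/2`, `r' = (r−1)/2`, `Δ = r − s`,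
`E[R_{[s,r]}] ≤ 2D²/η + ηG²Δ + η L_{[s,r]}/(4δ²) + 4δGΔ`,
where the expectation is the uniform average over all sign vectors. -/
theorem ogdSemp_interval_regret_bound
    (A B G C η δ : ℝ) (T : ℕ) (f : ℕ → ℝ → ℝ) (y0 : ℝ)
    (hη : 0 < η) (hδ : 0 < δ) (hδD : δ < (B - A) / 2)
    (hconv : ∀ t ∈ Finset.Icc 1 (T + 1), ConvexOn ℝ (Set.Icc A B) (f t))
    (hlip : ∀ t ∈ Finset.Icc 1 (T + 1), ∀ x ∈ Set.Icc A B, ∀ y ∈ Set.Icc A B,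
      |f t x - f t y| ≤ G * |x - y|)
    (hrange : ∀ t ∈ Finset.Icc 1 (T + 1), ∀ x ∈ Set.Icc A B, f t x ∈ Set.Icc 0 C)
    (hy0 : y0 ∈ Set.Icc (A + δ) (B - δ))
    (s r : ℕ) (hs : Odd s) (hr : Odd r) (hsr : s < r) (hrT : r ≤ T + 1) :
    (∑ σ : Fin (T + 1) → Bool,
        intervalRegret A B η δ f y0 (signOf (T + 1) σ) s r) / 2 ^ (T + 1) ≤
      2 * (B - A) ^ 2 / η + η * G ^ 2 * ((r : ℝ) - s) +
        η * (∑ k ∈ Finset.Icc ((s - 1) / 2) ((r - 1) / 2), (instDev A B f k) ^ 2) /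
          (4 * δ ^ 2) +
        4 * δ * G * ((r : ℝ) - s) := by
    classical
  have hab : A + δ ≤ B - δ := by linarith
  have hAB : A ≤ B := by linarith
  have h1T : (1:ℕ) ∈ Finset.Icc 1 (T+1) := by simp
  have hG0 : 0 ≤ G := by
    have h := hlip 1 h1T A (Set.left_mem_Icc.mpr hAB) B (Set.right_mem_Icc.mpr hAB)
    rw [show |A - B| = B - A by rw [abs_sub_comm]; exact abs_of_pos (by linarith)] at h
    nlinarith [abs_nonneg (f 1 A - f 1 B)]
  obtain ⟨s', rfl⟩ := hs
  obtain ⟨r', rfl⟩ := hr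
  have hs'r' : s' < r' := by omega
  -- the comparator: minimizer of the cumulative loss over [A,B]
  set S : ℝ → ℝ := fun x => ∑ t ∈ Finset.Icc (2*s'+1) (2*r'+1), f t x with hSdef
  have hmemT : ∀ t ∈ Finset.Icc (2*s'+1) (2*r'+1), t ∈ Finset.Icc 1 (T+1) := by
    intro t ht
    simp only [Finset.mem_Icc] at ht ⊢
    omega
  have hcont : ContinuousOn S (Set.Icc A B) := by
    apply continuousOn_finset_sum
    intro t ht
    have hlt := hlip t (hmemT t ht)
    have hL : LipschitzOnWith (Real.toNNReal G) (f t) (Set.Icc A B) := by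
      rw [lipschitzOnWith_iff_dist_le_mul]
      intro x hx y hy
      rw [Real.dist_eq, Real.dist_eq, Real.coe_toNNReal G hG0]
      exact hlt x hx y hy
    exact hL.continuousOn
  obtain ⟨ustar, hustar, humin⟩ :=
    isCompact_Icc.exists_isMinOn (Set.nonempty_Icc.mpr hAB) hcont
  have hminS : ∀ x ∈ Set.Icc A B, S ustar ≤ S x := fun x hx => humin hx
  have hInf : sInf (S '' Set.Icc A B) = S ustar := by
    apply IsLeast.csInf_eq
    exact ⟨Set.mem_image_of_mem S hustar, by rintro b ⟨x, hx, rfl⟩; exact hminS x hx⟩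
  -- projection of the comparator onto [A+δ, B-δ]
  set ud : ℝ := max (min (B - δ) ustar) (A + δ) with hud
  have hudK : ud ∈ Set.Icc (A+δ) (B-δ) := clampMem ustar hab
  have hudKw : ud ∈ Set.Icc A B := ⟨by linarith [hudK.1], by linarith [hudK.2]⟩
  have hudclose : |ud - ustar| ≤ δ := clampClose δ hδ.le hab hustar
  have hudf : ∀ t ∈ Finset.Icc 1 (T+1), f t ud ≤ f t ustar + G*δ := by
    intro t ht
    have h1 := hlip t ht ud hudKw ustar hustar
    have h2 : G * |ud - ustar| ≤ G*δ := mul_le_mul_of_nonneg_left hudclose hG0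
    linarith [le_trans (le_abs_self _) h1]
  have hYmem : ∀ (σ : Fin (T+1) → Bool) (k : ℕ),
      ogdY A B η δ f y0 (signOf (T+1) σ) k ∈ Set.Icc (A+δ) (B-δ) :=
    fun σ k => ogdY_mem (signOf (T+1) σ) hab hy0 k
  -- rewrite the played-loss sum into blocks
  have hplay : ∀ σ : Fin (T+1) → Bool,
      ∑ t ∈ Finset.Icc (2*s'+1) (2*r'+1), f t (ogdX A B η δ f y0 (signOf (T+1) σ) t)
      = ∑ k ∈ Finset.Ico s' r',
          (f (2*k+1) (ogdY A B η δ f y0 (signOf (T+1) σ) k + signOf (T+1) σ k * δ)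
           + f (2*k+2) (ogdY A B η δ f y0 (signOf (T+1) σ) k - signOf (T+1) σ k * δ))
        + f (2*r'+1) (ogdY A B η δ f y0 (signOf (T+1) σ) r' + signOf (T+1) σ r' * δ) := by
    intro σ
    rw [sum_odd_blocks _ s' r' hs'r'.le]
    congr 1
    · apply Finset.sum_congr rfl
      intro k _
      rw [ogdX_odd, ogdX_even]
    · rw [ogdX_odd]
  have hcard : ((Finset.univ : Finset (Fin (T+1) → Bool)).card : ℝ) = 2^(T+1) := by
    rw [Finset.card_univ]
    simp
  -- per-block bound
  have hblock : ∀ k, s' ≤ k → k < r' →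
      ∑ σ : Fin (T+1) → Bool,
        (f (2*k+1) (ogdY A B η δ f y0 (signOf (T+1) σ) k + signOf (T+1) σ k * δ)
          + f (2*k+2) (ogdY A B η δ f y0 (signOf (T+1) σ) k - signOf (T+1) σ k * δ))
      ≤ (∑ σ : Fin (T+1) → Bool,
          ((ogdY A B η δ f y0 (signOf (T+1) σ) k - ud)^2
            - (ogdY A B η δ f y0 (signOf (T+1) σ) (k+1) - ud)^2)/η)
        + 2^(T+1) * (f (2*k+1) ud + f (2*k+2) ud + η * G ^ 2
            + η * (instDev A B f k) ^ 2 / (4 * δ ^ 2) + 4 * (G * δ)) := by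
    intro k hk1 hk2
    have hkN : k < T+1 := by omega
    have ht1 : 2*k+1 ∈ Finset.Icc 1 (T+1) := by simp only [Finset.mem_Icc]; omega
    have ht2 : 2*k+2 ∈ Finset.Icc 1 (T+1) := by simp only [Finset.mem_Icc]; omega
    set Φ : ℝ → ℝ → ℝ := fun e w =>
      f (2*k+1) (w + e*δ) + f (2*k+2) (w - e*δ) -
        ((w - ud)^2 - (max (min (B - δ)
          (w - η * ((f (2*k+1) (w + e*δ) - f (2*k+2) (w - e*δ)) / (2*e*δ)))) (A + δ) - ud)^2)/η
      with hΦ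
    have hαb : ∀ x ∈ Set.Icc A B, |f (2*k+1) x - f (2*k+2) x| ≤ instDev A B f k := by
      intro x hx
      apply le_csSup
      · refine ⟨C, ?_⟩
        rintro z ⟨x', hx', rfl⟩
        have h1 := hrange _ ht1 x' hx'
        have h2 := hrange _ ht2 x' hx'
        rw [abs_le]
        exact ⟨by linarith [h1.1, h2.2], by linarith [h1.2, h2.1]⟩
      · exact Set.mem_image_of_mem _ hx
    have hsplit : ∀ σ : Fin (T+1) → Bool,
        f (2*k+1) (ogdY A B η δ f y0 (signOf (T+1) σ) k + signOf (T+1) σ k * δ)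
          + f (2*k+2) (ogdY A B η δ f y0 (signOf (T+1) σ) k - signOf (T+1) σ k * δ)
        = Φ (signOf (T+1) σ k) (ogdY A B η δ f y0 (signOf (T+1) σ) k)
          + ((ogdY A B η δ f y0 (signOf (T+1) σ) k - ud)^2
            - (ogdY A B η δ f y0 (signOf (T+1) σ) (k+1) - ud)^2)/η := by
      intro σ
      simp only [hΦ]
      rw [ogdY_step]
      ring
    calc ∑ σ : Fin (T+1) → Bool,
          (f (2*k+1) (ogdY A B η δ f y0 (signOf (T+1) σ) k + signOf (T+1) σ k * δ)
            + f (2*k+2) (ogdY A B η δ f y0 (signOf (T+1) σ) k - signOf (T+1) σ k * δ))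
        = (∑ σ : Fin (T+1) → Bool,
            Φ (signOf (T+1) σ k) (ogdY A B η δ f y0 (signOf (T+1) σ) k))
          + ∑ σ : Fin (T+1) → Bool,
            ((ogdY A B η δ f y0 (signOf (T+1) σ) k - ud)^2
              - (ogdY A B η δ f y0 (signOf (T+1) σ) (k+1) - ud)^2)/η := by
          rw [← Finset.sum_add_distrib]
          exact Finset.sum_congr rfl (fun σ _ => hsplit σ)
      _ ≤ 2^(T+1) * (f (2*k+1) ud + f (2*k+2) ud + η * G ^ 2
            + η * (instDev A B f k) ^ 2 / (4 * δ ^ 2) + 4 * (G * δ))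
          + ∑ σ : Fin (T+1) → Bool,
            ((ogdY A B η δ f y0 (signOf (T+1) σ) k - ud)^2
              - (ogdY A B η δ f y0 (signOf (T+1) σ) (k+1) - ud)^2)/η := by
          apply add_le_add_left
          rw [sum_flip (T+1) k hkN Φ A B η δ y0 f]
          have hle : ∀ σ : Fin (T+1) → Bool,
              (Φ 1 (ogdY A B η δ f y0 (signOf (T+1) σ) k)
                + Φ (-1) (ogdY A B η δ f y0 (signOf (T+1) σ) k)) / 2
              ≤ f (2*k+1) ud + f (2*k+2) ud + η * G ^ 2
                + η * (instDev A B f k) ^ 2 / (4 * δ ^ 2) + 4 * (G * δ) := by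
            intro σ
            simp only [hΦ]
            exact block_pointwise hη hδ (hconv _ ht1) (hconv _ ht2) (hlip _ ht1) (hlip _ ht2)
              hαb (ogdY A B η δ f y0 (signOf (T+1) σ) k) ud (hYmem σ k) hudK
          calc ∑ σ : Fin (T+1) → Bool,
                (Φ 1 (ogdY A B η δ f y0 (signOf (T+1) σ) k)
                  + Φ (-1) (ogdY A B η δ f y0 (signOf (T+1) σ) k)) / 2
              ≤ ∑ _σ : Fin (T+1) → Bool,
                  (f (2*k+1) ud + f (2*k+2) ud + η * G ^ 2
                    + η * (instDev A B f k) ^ 2 / (4 * δ ^ 2) + 4 * (G * δ)) :=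
                Finset.sum_le_sum (fun σ _ => hle σ)
            _ = 2^(T+1) * (f (2*k+1) ud + f (2*k+2) ud + η * G ^ 2
                  + η * (instDev A B f k) ^ 2 / (4 * δ ^ 2) + 4 * (G * δ)) := by
                rw [Finset.sum_const, nsmul_eq_mul, hcard]
      _ = _ := by ring
  have htele : ∀ σ : Fin (T+1) → Bool,
      ∑ k ∈ Finset.Ico s' r',
        ((ogdY A B η δ f y0 (signOf (T+1) σ) k - ud)^2
          - (ogdY A B η δ f y0 (signOf (T+1) σ) (k+1) - ud)^2)/η
      ≤ (B-A)^2/η := by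
    intro σ
    rw [← Finset.sum_div,
      sum_tele (fun k => (ogdY A B η δ f y0 (signOf (T+1) σ) k - ud)^2) s' r' hs'r'.le]
    have h1 := hYmem σ s'
    have h2 := hYmem σ r'
    refine (div_le_div_iff_of_pos_right hη).mpr ?_
    nlinarith [sq_nonneg (ogdY A B η δ f y0 (signOf (T+1) σ) r' - ud),
      mul_nonneg
        (by linarith [h1.1, h1.2, hudK.1, hudK.2] :
          (0:ℝ) ≤ (B-A) - (ogdY A B η δ f y0 (signOf (T+1) σ) s' - ud))
        (by linarith [h1.1, h1.2, hudK.1, hudK.2] :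
          (0:ℝ) ≤ (B-A) + (ogdY A B η δ f y0 (signOf (T+1) σ) s' - ud))]
  -- last (odd) round bound
  have hlast : ∀ σ : Fin (T+1) → Bool,
      f (2*r'+1) (ogdY A B η δ f y0 (signOf (T+1) σ) r' + signOf (T+1) σ r' * δ)
        ≤ f (2*r'+1) ustar + G*(B-A) := by
    intro σ
    obtain ⟨hy1, hy2⟩ := hYmem σ r'
    have hmemr : 2*r'+1 ∈ Finset.Icc 1 (T+1) := by simp only [Finset.mem_Icc]; omega
    have hx : ogdY A B η δ f y0 (signOf (T+1) σ) r' + signOf (T+1) σ r' * δ ∈ Set.Icc A B := by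
      rcases signOf_pm (T+1) σ r' with h | h <;> rw [h] <;>
        exact ⟨by linarith, by linarith⟩
    have h1 := hlip _ hmemr _ hx ustar hustar
    have h2 : |ogdY A B η δ f y0 (signOf (T+1) σ) r' + signOf (T+1) σ r' * δ - ustar|
        ≤ B - A := by
      rw [abs_le]
      obtain ⟨hu1, hu2⟩ := hustar
      obtain ⟨hx1, hx2⟩ := hx
      exact ⟨by linarith, by linarith⟩
    have h3 := le_trans (le_abs_self _) h1
    nlinarith [mul_le_mul_of_nonneg_left h2 hG0]
  -- number of blocks
  have hcardIco : (Finset.Ico s' r').card = r' - s' := Nat.card_Ico s' r'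
  -- sum the block bounds
  have hmain : ∑ σ : Fin (T+1) → Bool,
      ∑ t ∈ Finset.Icc (2*s'+1) (2*r'+1), f t (ogdX A B η δ f y0 (signOf (T+1) σ) t)
      ≤ 2^(T+1) * (S ustar + ((B-A)^2/η
          + ((r' - s' : ℕ):ℝ) * (η*G^2 + 4*(G*δ) + 2*(G*δ))
          + η * (∑ k ∈ Finset.Ico s' r', (instDev A B f k)^2)/(4*δ^2)
          + G*(B-A))) := by
    calc ∑ σ : Fin (T+1) → Bool,
          ∑ t ∈ Finset.Icc (2*s'+1) (2*r'+1), f t (ogdX A B η δ f y0 (signOf (T+1) σ) t)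
        = (∑ k ∈ Finset.Ico s' r', ∑ σ : Fin (T+1) → Bool,
            (f (2*k+1) (ogdY A B η δ f y0 (signOf (T+1) σ) k + signOf (T+1) σ k * δ)
              + f (2*k+2) (ogdY A B η δ f y0 (signOf (T+1) σ) k - signOf (T+1) σ k * δ)))
          + ∑ σ : Fin (T+1) → Bool,
              f (2*r'+1) (ogdY A B η δ f y0 (signOf (T+1) σ) r' + signOf (T+1) σ r' * δ) := by
          conv_rhs => rw [Finset.sum_comm]
          rw [← Finset.sum_add_distrib]
          exact Finset.sum_congr rfl (fun σ _ => hplay σ)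
      _ ≤ (∑ k ∈ Finset.Ico s' r',
            ((∑ σ : Fin (T+1) → Bool,
              ((ogdY A B η δ f y0 (signOf (T+1) σ) k - ud)^2
                - (ogdY A B η δ f y0 (signOf (T+1) σ) (k+1) - ud)^2)/η)
            + 2^(T+1) * (f (2*k+1) ud + f (2*k+2) ud + η * G ^ 2
                + η * (instDev A B f k) ^ 2 / (4 * δ ^ 2) + 4 * (G * δ))))
          + ∑ σ : Fin (T+1) → Bool, (f (2*r'+1) ustar + G*(B-A)) := by
          apply add_le_add
          · apply Finset.sum_le_sum
            intro k hk
            rw [Finset.mem_Ico] at hk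
            exact hblock k hk.1 hk.2
          · exact Finset.sum_le_sum (fun σ _ => hlast σ)
      _ ≤ (2^(T+1) * ((B-A)^2/η)
            + ∑ k ∈ Finset.Ico s' r',
              2^(T+1) * (f (2*k+1) ud + f (2*k+2) ud + η * G ^ 2
                + η * (instDev A B f k) ^ 2 / (4 * δ ^ 2) + 4 * (G * δ)))
          + 2^(T+1) * (f (2*r'+1) ustar + G*(B-A)) := by
          apply add_le_add
          · rw [Finset.sum_add_distrib]
            apply add_le_add_left
            rw [Finset.sum_comm (s := Finset.Ico s' r') (t := Finset.univ)]
            calc ∑ σ : Fin (T+1) → Bool, ∑ k ∈ Finset.Ico s' r',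
                  ((ogdY A B η δ f y0 (signOf (T+1) σ) k - ud)^2
                    - (ogdY A B η δ f y0 (signOf (T+1) σ) (k+1) - ud)^2)/η
                ≤ ∑ _σ : Fin (T+1) → Bool, (B-A)^2/η :=
                  Finset.sum_le_sum (fun σ _ => htele σ)
              _ = 2^(T+1) * ((B-A)^2/η) := by
                  rw [Finset.sum_const, nsmul_eq_mul, hcard]
          · rw [Finset.sum_const, nsmul_eq_mul, hcard]
      _ ≤ (2^(T+1) * ((B-A)^2/η)
            + 2^(T+1) * ((∑ k ∈ Finset.Ico s' r', (f (2*k+1) ustar + f (2*k+2) ustar))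
                + ((r' - s' : ℕ):ℝ) * (2*(G*δ))
                + ((r' - s' : ℕ):ℝ) * (η * G^2 + 4*(G*δ))
                + η * (∑ k ∈ Finset.Ico s' r', (instDev A B f k)^2)/(4*δ^2)))
          + 2^(T+1) * (f (2*r'+1) ustar + G*(B-A)) := by
          apply add_le_add_left
          apply add_le_add_right
          rw [← Finset.mul_sum]
          apply mul_le_mul_of_nonneg_left ?_ (by positivity : (0:ℝ) ≤ 2^(T+1))
          have hexp : ∀ k ∈ Finset.Ico s' r',
              f (2*k+1) ud + f (2*k+2) ud + η * G ^ 2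
                + η * (instDev A B f k) ^ 2 / (4 * δ ^ 2) + 4 * (G * δ)
              ≤ (f (2*k+1) ustar + f (2*k+2) ustar) + 2*(G*δ) + (η * G^2 + 4*(G*δ))
                + η * (instDev A B f k) ^ 2 / (4 * δ ^ 2) := by
            intro k hk
            rw [Finset.mem_Ico] at hk
            have ht1 : 2*k+1 ∈ Finset.Icc 1 (T+1) := by simp only [Finset.mem_Icc]; omega
            have ht2 : 2*k+2 ∈ Finset.Icc 1 (T+1) := by simp only [Finset.mem_Icc]; omega
            have := hudf _ ht1
            have := hudf _ ht2
            linarith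
          calc ∑ k ∈ Finset.Ico s' r',
                (f (2*k+1) ud + f (2*k+2) ud + η * G ^ 2
                  + η * (instDev A B f k) ^ 2 / (4 * δ ^ 2) + 4 * (G * δ))
              ≤ ∑ k ∈ Finset.Ico s' r',
                ((f (2*k+1) ustar + f (2*k+2) ustar) + 2*(G*δ) + (η * G^2 + 4*(G*δ))
                  + η * (instDev A B f k) ^ 2 / (4 * δ ^ 2)) :=
                Finset.sum_le_sum hexp
            _ = (∑ k ∈ Finset.Ico s' r', (f (2*k+1) ustar + f (2*k+2) ustar))
                + ((r' - s' : ℕ):ℝ) * (2*(G*δ))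
                + ((r' - s' : ℕ):ℝ) * (η * G^2 + 4*(G*δ))
                + η * (∑ k ∈ Finset.Ico s' r', (instDev A B f k)^2)/(4*δ^2) := by
                rw [Finset.sum_add_distrib, Finset.sum_add_distrib, Finset.sum_add_distrib,
                  Finset.sum_const, Finset.sum_const, hcardIco, nsmul_eq_mul, nsmul_eq_mul]
                rw [← Finset.sum_div, ← Finset.mul_sum]
      _ = 2^(T+1) * (S ustar + ((B-A)^2/η
            + ((r' - s' : ℕ):ℝ) * (η*G^2 + 4*(G*δ) + 2*(G*δ))
            + η * (∑ k ∈ Finset.Ico s' r', (instDev A B f k)^2)/(4*δ^2)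
            + G*(B-A))) := by
          have hSu : S ustar = (∑ k ∈ Finset.Ico s' r', (f (2*k+1) ustar + f (2*k+2) ustar))
              + f (2*r'+1) ustar := by
            rw [hSdef]
            exact sum_odd_blocks (fun t => f t ustar) s' r' hs'r'.le
          rw [hSu]
          ring
  -- put everything together
  have hidx1 : (2*s'+1-1)/2 = s' := by omega
  have hidx2 : (2*r'+1-1)/2 = r' := by omega
  rw [hidx1, hidx2]
  rw [div_le_iff₀ (by positivity : (0:ℝ) < 2^(T+1))]
  have hreg : ∑ σ : Fin (T+1) → Bool,
      intervalRegret A B η δ f y0 (signOf (T+1) σ) (2*s'+1) (2*r'+1)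
      = (∑ σ : Fin (T+1) → Bool,
          ∑ t ∈ Finset.Icc (2*s'+1) (2*r'+1), f t (ogdX A B η δ f y0 (signOf (T+1) σ) t))
        - 2^(T+1) * S ustar := by
    simp only [intervalRegret]
    rw [Finset.sum_sub_distrib, ← hSdef, hInf, Finset.sum_const, nsmul_eq_mul, hcard]
  rw [hreg]
  -- final arithmetic
  have hkey : G*(B-A) ≤ (B-A)^2/η + η*G^2 := by
    rw [div_add' _ _ _ hη.ne', le_div_iff₀ hη]
    nlinarith [sq_nonneg (B - A - η*G),
      mul_nonneg (mul_nonneg hG0 (by linarith : (0:ℝ) ≤ B - A)) hη.le]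
  have hn1 : η*G^2 ≤ ((r' - s' : ℕ):ℝ) * (η*G^2) :=
    le_mul_of_one_le_left (by positivity) (by exact_mod_cast Nat.one_le_iff_ne_zero.mpr (by omega))
  have hpos1 : (0:ℝ) ≤ ((r' - s' : ℕ):ℝ) * (G*δ) := by positivity
  have hpos2 : (0:ℝ) ≤ η * (instDev A B f r')^2 / (4*δ^2) := by positivity
  have hcastn : ((2*r'+1 : ℕ):ℝ) - ((2*s'+1 : ℕ):ℝ) = 2*(((r' - s' : ℕ)):ℝ) := by
    rw [Nat.cast_sub hs'r'.le]
    push_cast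
    ring
  have hIccsum : ∑ k ∈ Finset.Icc s' r', (instDev A B f k)^2
      = ∑ k ∈ Finset.Ico s' r', (instDev A B f k)^2 + (instDev A B f r')^2 := by
    rw [← Finset.Ico_add_one_right_eq_Icc, Finset.sum_Ico_succ_top hs'r'.le]
  rw [hIccsum]
  have hsplitdiv : η * ((∑ k ∈ Finset.Ico s' r', (instDev A B f k)^2)
        + (instDev A B f r')^2) / (4*δ^2)
      = η * (∑ k ∈ Finset.Ico s' r', (instDev A B f k)^2)/(4*δ^2)
        + η * (instDev A B f r')^2/(4*δ^2) := by ring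
  have hfinal : S ustar + ((B-A)^2/η
        + ((r' - s' : ℕ):ℝ) * (η*G^2 + 4*(G*δ) + 2*(G*δ))
        + η * (∑ k ∈ Finset.Ico s' r', (instDev A B f k)^2)/(4*δ^2)
        + G*(B-A)) - S ustar
      ≤ 2 * (B - A) ^ 2 / η + η * G ^ 2 * (((2*r'+1 : ℕ):ℝ) - ((2*s'+1 : ℕ):ℝ))
        + η * ((∑ k ∈ Finset.Ico s' r', (instDev A B f k)^2)
            + (instDev A B f r')^2) / (4 * δ ^ 2)
        + 4 * δ * G * (((2*r'+1 : ℕ):ℝ) - ((2*s'+1 : ℕ):ℝ)) := by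
    rw [hcastn, hsplitdiv]
    have h2D : 2 * (B - A) ^ 2 / η = (B-A)^2/η + (B-A)^2/η := by ring
    rw [h2D]
    linarith [hkey, hn1, hpos1, hpos2]
  calc (∑ σ : Fin (T+1) → Bool,
        ∑ t ∈ Finset.Icc (2*s'+1) (2*r'+1), f t (ogdX A B η δ f y0 (signOf (T+1) σ) t))
        - 2^(T+1) * S ustar
      ≤ 2^(T+1) * (S ustar + ((B-A)^2/η
          + ((r' - s' : ℕ):ℝ) * (η*G^2 + 4*(G*δ) + 2*(G*δ))
          + η * (∑ k ∈ Finset.Ico s' r', (instDev A B f k)^2)/(4*δ^2)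
          + G*(B-A))) - 2^(T+1) * S ustar := by linarith [hmain]
    _ = 2^(T+1) * (S ustar + ((B-A)^2/η
          + ((r' - s' : ℕ):ℝ) * (η*G^2 + 4*(G*δ) + 2*(G*δ))
          + η * (∑ k ∈ Finset.Ico s' r', (instDev A B f k)^2)/(4*δ^2)
          + G*(B-A)) - S ustar) := by ring
    _ ≤ _ := by
        rw [mul_comm]
        apply mul_le_mul_of_nonneg_right hfinal (by positivity : (0:ℝ) ≤ 2^(T+1))
end

section
/- Let [A, B] ⊂ ℝ have diameter D = B − A, let η > 0, and let c_{s'}, c_{s'+1}, …, c_{r'} : ℝ → ℝ be convex functions. Suppose y_{s'} ∈ [A, B] and, for each k, y_{k+1} = Π_{[A,B]}(y_k − η g_k), where g_k is a subgradient of c_k at y_k satisfying |g_k| ≤ G_k. Then for every x ∈ [A, B], Σ_{k=s'}^{r'} (c_k(y_k) − c_k(x)) ≤ D²/η + (η/2) Σ_{k=s'}^{r'} G_k². -/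
lemma clamp_sq_le (A B x z : ℝ) (hA : A ≤ x) (hB : x ≤ B) :
    (max (min B z) A - x) ^ 2 ≤ (z - x) ^ 2 := by
  rcases max_cases (min B z) A with ⟨h1, h2⟩ | ⟨h1, h2⟩ <;>
    rcases min_cases B z with ⟨h3, h4⟩ | ⟨h3, h4⟩
  · rw [h1, h3]
    nlinarith [mul_nonneg (sub_nonneg.2 h4) (sub_nonneg.2 hB)]
  · rw [h1, h3]
  · rw [h3] at h2; linarith
  · rw [h3] at h2
    rw [h1]
    nlinarith [mul_nonneg (sub_nonneg.2 hA) (sub_nonneg.2 h2.le)]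

lemma tel_sum (f : ℕ → ℝ) (s r : ℕ) (h : s ≤ r) :
    ∑ k ∈ Finset.Icc s r, (f k - f (k + 1)) = f s - f (r + 1) := by
  induction r, h using Nat.le_induction with
  | base => simp
  | succ n hn ih =>
      rw [Finset.sum_Icc_succ_top (hn.trans n.le_succ), ih]
      ring

/-- Zinkevich's regret bound for projected online (sub)gradient descent on `[A,B]`
with constant step size `η`: if `y_{k+1} = Π_{[A,B]}(y_k − η g_k)` where `g_k` is a
subgradient of the convex loss `c_k` at `y_k` with `|g_k| ≤ G_k`, then for all
`x ∈ [A,B]`, `Σ_{k=s'}^{r'} (c_k(y_k) − c_k(x)) ≤ D²/η + (η/2) Σ_{k=s'}^{r'} G_k²`. -/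
theorem ogd_regret_bound (A B η : ℝ) (hη : 0 < η)
    (c : ℕ → ℝ → ℝ) (y g G : ℕ → ℝ) (s' r' : ℕ) (hs'r' : s' ≤ r')
    (hconv : ∀ k ∈ Finset.Icc s' r', ConvexOn ℝ Set.univ (c k))
    (hy0 : y s' ∈ Set.Icc A B)
    (hsubgrad : ∀ k ∈ Finset.Icc s' r', ∀ x : ℝ, c k x ≥ c k (y k) + g k * (x - y k))
    (hgbound : ∀ k ∈ Finset.Icc s' r', |g k| ≤ G k)
    (hupdate : ∀ k ∈ Finset.Icc s' r', y (k + 1) = max (min B (y k - η * g k)) A) :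
    ∀ x ∈ Set.Icc A B,
      ∑ k ∈ Finset.Icc s' r', (c k (y k) - c k x) ≤
        (B - A) ^ 2 / η + η / 2 * ∑ k ∈ Finset.Icc s' r', G k ^ 2 := by
  intro x hx
  obtain ⟨hAx, hxB⟩ := hx
  have key : ∀ k ∈ Finset.Icc s' r',
      c k (y k) - c k x ≤
        ((y k - x) ^ 2 - (y (k + 1) - x) ^ 2) / (2 * η) + η / 2 * G k ^ 2 := by
    intro k hk
    have hsub := hsubgrad k hk x
    have hclamp : (y (k + 1) - x) ^ 2 ≤ (y k - η * g k - x) ^ 2 := by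
      rw [hupdate k hk]; exact clamp_sq_le A B x _ hAx hxB
    have hG : g k ^ 2 ≤ G k ^ 2 := by
      have h1 := hgbound k hk
      nlinarith [abs_nonneg (g k), sq_abs (g k)]
    have hη' : (0:ℝ) < 2 * η := by linarith
    have h2 : ((y k - x) ^ 2 - (y (k + 1) - x) ^ 2) / (2 * η) + η / 2 * G k ^ 2
        = ((y k - x) ^ 2 - (y (k + 1) - x) ^ 2 + η ^ 2 * G k ^ 2) / (2 * η) := by
      field_simp
    rw [h2, le_div_iff₀ hη']
    nlinarith [hsub, hclamp, hG, mul_le_mul_of_nonneg_left hG (sq_nonneg η),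
      mul_le_mul_of_nonneg_left (show c k (y k) - c k x ≤ g k * (y k - x) by nlinarith) hη'.le]
  have hsum := Finset.sum_le_sum key
  have hsplit : ∑ k ∈ Finset.Icc s' r',
      (((y k - x) ^ 2 - (y (k + 1) - x) ^ 2) / (2 * η) + η / 2 * G k ^ 2)
      = ((y s' - x) ^ 2 - (y (r' + 1) - x) ^ 2) / (2 * η)
        + η / 2 * ∑ k ∈ Finset.Icc s' r', G k ^ 2 := by
    rw [Finset.sum_add_distrib, ← Finset.sum_div, tel_sum (fun k => (y k - x) ^ 2) s' r' hs'r',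
      Finset.mul_sum]
  have hfirst : ((y s' - x) ^ 2 - (y (r' + 1) - x) ^ 2) / (2 * η) ≤ (B - A) ^ 2 / η := by
    have h1 : (y s' - x) ^ 2 ≤ (B - A) ^ 2 := by
      obtain ⟨h2, h3⟩ := hy0
      nlinarith
    have h2 : (0:ℝ) ≤ (y (r' + 1) - x) ^ 2 := sq_nonneg _
    rw [div_le_div_iff₀ (by linarith) hη]
    nlinarith [sq_nonneg (B - A)]
  calc ∑ k ∈ Finset.Icc s' r', (c k (y k) - c k x)
      ≤ _ := hsum
    _ = _ := hsplit
    _ ≤ (B - A) ^ 2 / η + η / 2 * ∑ k ∈ Finset.Icc s' r', G k ^ 2 := by linarith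
end
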